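/- Let 𝔤 = 𝔥 ⊕ 𝔪 be a reductive decomposition and let r : 𝔪* → 𝔪 be skew, 𝔥-equivariant, and satisfy r([α, β]_r) = p_𝔪([r α, r β]) for all α, β ∈ 𝔪*. Let Im(r) := {r α : α ∈ 𝔪*} ⊆ 𝔪. Then 𝔥 + Im(r) is a Lie subalgebra of 𝔤, 𝔥 ∩ Im(r) = 0, and [u, r α] ∈ Im(r) for every u ∈ 𝔥 and α ∈ 𝔪*. -/

import Mathlib

/-- The projection `p_𝔪 : 𝔤 → 𝔪` along `𝔥`, for a decomposition `𝔤 = 𝔥 ⊕ 𝔪`. -/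
noncomputable def pm {L : Type*} [LieRing L] [LieAlgebra ℝ L]
    (H : LieSubalgebra ℝ L) (m : Submodule ℝ L)
    (hc : IsCompl H.toSubmodule m) : L →ₗ[ℝ] m :=
  Submodule.linearProjOfIsCompl m H.toSubmodule hc.symm

/-- For `x ∈ 𝔤`, the map `𝔪 → 𝔪`, `v ↦ p_𝔪([x, v])`. -/
noncomputable def adm {L : Type*} [LieRing L] [LieAlgebra ℝ L]
    (H : LieSubalgebra ℝ L) (m : Submodule ℝ L)
    (hc : IsCompl H.toSubmodule m) (x : L) : m →ₗ[ℝ] m :=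
  pm H m hc ∘ₗ (LieAlgebra.ad ℝ L x) ∘ₗ m.subtype

/-- The bracket `[α, β]_r : u ↦ α([rβ, u]_𝔪) - β([rα, u]_𝔪)` on `𝔪*`. -/
noncomputable def bracketr {L : Type*} [LieRing L] [LieAlgebra ℝ L]
    (H : LieSubalgebra ℝ L) (m : Submodule ℝ L)
    (hc : IsCompl H.toSubmodule m) (r : Module.Dual ℝ m →ₗ[ℝ] m)
    (α β : Module.Dual ℝ m) : Module.Dual ℝ m :=
  α ∘ₗ adm H m hc (r β : L) - β ∘ₗ adm H m hc (r α : L)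

/-- `r : 𝔪* → 𝔪` is skew: `ξ(rη) = -η(rξ)`. -/
def rIsSkew {L : Type*} [LieRing L] [LieAlgebra ℝ L]
    (m : Submodule ℝ L) (r : Module.Dual ℝ m →ₗ[ℝ] m) : Prop :=
  ∀ η ξ : Module.Dual ℝ m, ξ (r η) = - η (r ξ)

/-- `r : 𝔪* → 𝔪` is `𝔥`-equivariant: `r(α ∘ (ad u)|_𝔪) = -[u, rα]` for `u ∈ 𝔥`. -/
def rIsEquivariant {L : Type*} [LieRing L] [LieAlgebra ℝ L]
    (H : LieSubalgebra ℝ L) (m : Submodule ℝ L)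
    (hc : IsCompl H.toSubmodule m) (r : Module.Dual ℝ m →ₗ[ℝ] m) : Prop :=
  ∀ u ∈ H, ∀ α : Module.Dual ℝ m,
    (r (α ∘ₗ adm H m hc u) : L) = -⁅u, (r α : L)⁆

/-- `r` satisfies the Yang–Baxter-type equation `r([α,β]_r) = p_𝔪([rα, rβ])`. -/
def rIsYB {L : Type*} [LieRing L] [LieAlgebra ℝ L]
    (H : LieSubalgebra ℝ L) (m : Submodule ℝ L)
    (hc : IsCompl H.toSubmodule m) (r : Module.Dual ℝ m →ₗ[ℝ] m) : Prop :=
  ∀ α β : Module.Dual ℝ m,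
    r (bracketr H m hc r α β) = pm H m hc ⁅(r α : L), (r β : L)⁆

/-! `𝔥 + Im(r)` is closed under brackets: `[𝔥, 𝔥] ⊆ 𝔥` as `𝔥` is a subalgebra, equivariance
turns `[u, rα]` into `r(-α ∘ ad u)`, and the Yang–Baxter-type equation says that the
`𝔪`-component of `[rα, rβ]` is `r([α, β]_r)`, so `[rα, rβ]` lies in `𝔥 + Im(r)`. Since
`Im(r) ⊆ 𝔪` and `𝔥 ∩ 𝔪 = 0`, the sum is direct. -/

theorem Submodule.lie_mem_sup {R L : Type*} [Ring R] [LieRing L] [Module R L]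
    {P Q : Submodule R L}
    (hPP : ∀ x ∈ P, ∀ y ∈ P, ⁅x, y⁆ ∈ P ⊔ Q) (hPQ : ∀ x ∈ P, ∀ y ∈ Q, ⁅x, y⁆ ∈ P ⊔ Q)
    (hQQ : ∀ x ∈ Q, ∀ y ∈ Q, ⁅x, y⁆ ∈ P ⊔ Q) {x y : L} (hx : x ∈ P ⊔ Q) (hy : y ∈ P ⊔ Q) :
    ⁅x, y⁆ ∈ P ⊔ Q := by
  obtain ⟨a, ha, b, hb, rfl⟩ := Submodule.mem_sup.mp hx
  obtain ⟨c, hc, d, hd, rfl⟩ := Submodule.mem_sup.mp hy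
  have hQP : ⁅b, c⁆ ∈ P ⊔ Q := by
    rw [← lie_skew]
    exact neg_mem (hPQ c hc b hb)
  rw [add_lie, lie_add, lie_add]
  exact add_mem (add_mem (hPP a ha c hc) (hPQ a ha d hd)) (add_mem hQP (hQQ b hb d hd))

theorem Submodule.inf_range_subtype_comp_eq_bot {R M N : Type*} [Ring R] [AddCommGroup M]
    [Module R M] [AddCommGroup N] [Module R N] {p q : Submodule R M} (hpq : Disjoint p q)
    (f : N →ₗ[R] q) : p ⊓ LinearMap.range (q.subtype ∘ₗ f) = ⊥ :=
  (hpq.mono_right (by rintro _ ⟨n, rfl⟩; exact (f n).2)).eq_bot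

section ReductiveDecomposition

variable {L : Type*} [LieRing L] [LieAlgebra ℝ L] {H : LieSubalgebra ℝ L} {m : Submodule ℝ L}
  {hc : IsCompl H.toSubmodule m} {r : Module.Dual ℝ m →ₗ[ℝ] m}

theorem mem_sup_of_pm_mem {K : Submodule ℝ L} {x : L} (hx : (pm H m hc x : L) ∈ K) :
    x ∈ H.toSubmodule ⊔ K := by
  have hH : x - pm H m hc x ∈ H.toSubmodule := by
    change x - m.projection H.toSubmodule hc.symm x ∈ _
    rw [← Submodule.projection_eq_self_sub_projection hc.symm]
    exact Submodule.projection_apply_mem _ _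
  simpa using Submodule.add_mem_sup hH hx

theorem lie_mem_range_of_rIsEquivariant (hequiv : rIsEquivariant H m hc r) {u : L} (hu : u ∈ H)
    (α : Module.Dual ℝ m) : ⁅u, (r α : L)⁆ ∈ LinearMap.range (m.subtype ∘ₗ r) :=
  ⟨-(α ∘ₗ adm H m hc u), by simp [hequiv u hu α]⟩

theorem lie_mem_sup_range_of_rIsYB (hyb : rIsYB H m hc r) (α β : Module.Dual ℝ m) :
    ⁅(r α : L), (r β : L)⁆ ∈ H.toSubmodule ⊔ LinearMap.range (m.subtype ∘ₗ r) :=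
  mem_sup_of_pm_mem (hc := hc) ⟨bracketr H m hc r α β, by simp [hyb α β]⟩

end ReductiveDecomposition

theorem h_plus_im_r_subalgebra_general {L : Type*} [LieRing L] [LieAlgebra ℝ L]
    (H : LieSubalgebra ℝ L) (m : Submodule ℝ L)
    (hc : IsCompl H.toSubmodule m)
    (r : Module.Dual ℝ m →ₗ[ℝ] m)
    (hequiv : rIsEquivariant H m hc r)
    (hyb : rIsYB H m hc r) :
    (∀ x y : L, x ∈ H.toSubmodule ⊔ LinearMap.range (m.subtype ∘ₗ r) →
      y ∈ H.toSubmodule ⊔ LinearMap.range (m.subtype ∘ₗ r) →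
      ⁅x, y⁆ ∈ H.toSubmodule ⊔ LinearMap.range (m.subtype ∘ₗ r)) ∧
    (H.toSubmodule ⊓ LinearMap.range (m.subtype ∘ₗ r) = ⊥) ∧
    (∀ u ∈ H, ∀ α : Module.Dual ℝ m,
      ⁅u, (r α : L)⁆ ∈ LinearMap.range (m.subtype ∘ₗ r)) := by
  refine ⟨fun x y hx hy => Submodule.lie_mem_sup ?_ ?_ ?_ hx hy,
    Submodule.inf_range_subtype_comp_eq_bot hc.disjoint r,
    fun u hu => lie_mem_range_of_rIsEquivariant hequiv hu⟩
  · exact fun u hu v hv => Submodule.mem_sup_left (H.lie_mem hu hv)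
  · rintro u hu _ ⟨β, rfl⟩
    exact Submodule.mem_sup_right (lie_mem_range_of_rIsEquivariant hequiv hu β)
  · rintro _ ⟨α, rfl⟩ _ ⟨β, rfl⟩
    exact lie_mem_sup_range_of_rIsYB hyb α β

/-- for a skew, `𝔥`-equivariant solution `r` of the Yang–Baxter-type
equation, `𝔥 + Im(r)` is a Lie subalgebra of `𝔤`, `𝔥 ∩ Im(r) = 0`, and
`[𝔥, Im(r)] ⊆ Im(r)`. -/
theorem h_plus_im_r_subalgebra {L : Type*} [LieRing L] [LieAlgebra ℝ L]
    [FiniteDimensional ℝ L]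
    (H : LieSubalgebra ℝ L) (m : Submodule ℝ L)
    (hc : IsCompl H.toSubmodule m)
    (hred : ∀ u ∈ H, ∀ v ∈ m, ⁅u, v⁆ ∈ m)
    (r : Module.Dual ℝ m →ₗ[ℝ] m)
    (hskew : rIsSkew m r) (hequiv : rIsEquivariant H m hc r)
    (hyb : rIsYB H m hc r) :
    (∀ x y : L, x ∈ H.toSubmodule ⊔ LinearMap.range (m.subtype ∘ₗ r) →
      y ∈ H.toSubmodule ⊔ LinearMap.range (m.subtype ∘ₗ r) →
      ⁅x, y⁆ ∈ H.toSubmodule ⊔ LinearMap.range (m.subtype ∘ₗ r)) ∧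
    (H.toSubmodule ⊓ LinearMap.range (m.subtype ∘ₗ r) = ⊥) ∧
    (∀ u ∈ H, ∀ α : Module.Dual ℝ m,
      ⁅u, (r α : L)⁆ ∈ LinearMap.range (m.subtype ∘ₗ r)) :=
  h_plus_im_r_subalgebra_general H m hc r hequiv hyb
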